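/- arXiv:2108.03228 — 2 statements merged into one kernel-verified Lean document; each statement's English description precedes it below -/
import Mathlib

section
/- For N ≥ 1, l ∈ {0,…,N}, k > 0, and z ∈ ℂ^N with pairwise distinct nonzero coordinates, the elementary symmetric polynomial e_l is an eigenfunction of the operator H_k f = −Σ_j z_j² ∂²f/∂z_j² − (1 − k(N−1)) Σ_j z_j ∂f/∂z_j − 2k Σ_j Σ_{m ≠ j} (z_j²/(z_j − z_m)) ∂f/∂z_j with eigenvalue −l(1 + k(N−l)); equivalently, (1/k)H_k e_l = −l(1/k + N − l) e_l. -/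
/-- The `l`-th elementary symmetric polynomial in `N` complex variables. -/
noncomputable def esymm (N l : ℕ) (z : Fin N → ℂ) : ℂ :=
  ∑ s ∈ Finset.univ.powersetCard l, ∏ i ∈ s, z i

/-- Partial derivative with respect to the `j`-th coordinate. -/
noncomputable def pderiv' (N : ℕ) (f : (Fin N → ℂ) → ℂ) (j : Fin N) (z : Fin N → ℂ) : ℂ :=
  deriv (fun t => f (Function.update z j t)) (z j)

/-- Second partial derivative with respect to the `j`-th coordinate. -/
noncomputable def pderiv2 (N : ℕ) (f : (Fin N → ℂ) → ℂ) (j : Fin N) (z : Fin N → ℂ) : ℂ :=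
  iteratedDeriv 2 (fun t => f (Function.update z j t)) (z j)

/-!
In each single variable `z j`, `e_l` is affine with slope `e_{l-1}` of the remaining variables, so
the second-order part of `H_k` vanishes. The first-order parts are handled by Euler's identity
`∑ j, z j * e_{l-1}(ẑ_j) = l * e_l` and by the splitting
`z j ^ 2 / (z j - z m) = z j + z j * z m / (z j - z m)`. Symmetrizing the singular part in `(j, m)`
and using `e_{l-1}(ẑ_j) - e_{l-1}(ẑ_m) = (z m - z j) * e_{l-2}(ẑ_{j,m})` cancels every
denominator, leaving `-(1/2) ∑_{j ≠ m} z j * z m * e_{l-2}(ẑ_{j,m}) = -(1/2) l (l - 1) e_l`.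
-/

open Finset

section CommSemiring
variable {α R : Type*} [CommSemiring R] (z : α → R)

noncomputable def esymmOn (U : Finset α) (r : ℕ) : R :=
  ∑ s ∈ U.powersetCard r, ∏ i ∈ s, z i

lemma esymmOn_insert_succ [DecidableEq α] {a : α} {U : Finset α} (ha : a ∉ U) (r : ℕ) :
    esymmOn z (insert a U) (r + 1) = esymmOn z U (r + 1) + z a * esymmOn z U r := by
  simp only [esymmOn, ← Finset.esymm_map_val, insert_val_of_notMem ha, Multiset.map_cons,
    Multiset.esymm, Multiset.powersetCard_cons, Multiset.map_add, Multiset.sum_add,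
    Multiset.map_map, Function.comp_def, Multiset.prod_cons, Multiset.sum_map_mul_left]

@[simp] lemma esymmOn_zero (U : Finset α) : esymmOn z U 0 = 1 := by simp [esymmOn]

lemma esymmOn_one (U : Finset α) : esymmOn z U 1 = ∑ i ∈ U, z i := by
  simp [esymmOn, powersetCard_one]

lemma esymmOn_congr {w : α → R} {U : Finset α} (h : ∀ i ∈ U, z i = w i) (r : ℕ) :
    esymmOn z U r = esymmOn w U r :=
  sum_congr rfl fun _ hs => prod_congr rfl fun i hi => h i ((mem_powersetCard.1 hs).1 hi)

lemma sum_mul_esymmOn_erase [DecidableEq α] (U : Finset α) (r : ℕ) :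
    ∑ j ∈ U, z j * esymmOn z (U.erase j) r = (r + 1) * esymmOn z U (r + 1) := by
  induction U using Finset.induction_on generalizing r with
  | empty => simp [esymmOn, powersetCard_eq_empty.2 (by simp : #(∅ : Finset α) < r + 1)]
  | insert a U ha ih =>
    have herase : ∀ j ∈ U, (insert a U).erase j = insert a (U.erase j) := fun j hj =>
      erase_insert_of_ne fun h => ha (h ▸ hj)
    have ha' : ∀ j, a ∉ U.erase j := fun j h => ha (mem_of_mem_erase h)
    rw [sum_insert ha, erase_insert ha, sum_congr rfl fun j hj => by rw [herase j hj]]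
    cases r with
    | zero => simp [esymmOn_one, sum_insert ha]
    | succ r =>
      simp only [esymmOn_insert_succ z (ha' _), esymmOn_insert_succ z ha, mul_add, sum_add_distrib,
        ih, mul_left_comm _ (z a), ← mul_sum]
      push_cast
      ring

end CommSemiring

section CommRing
variable {α R : Type*} [CommRing R] [DecidableEq α] (z : α → R)

lemma esymmOn_erase_sub_esymmOn_erase {U : Finset α} {j m : α} (hj : j ∈ U) (hm : m ∈ U)
    (hjm : j ≠ m) (r : ℕ) :
    esymmOn z (U.erase j) (r + 1) - esymmOn z (U.erase m) (r + 1)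
      = (z m - z j) * esymmOn z ((U.erase j).erase m) r := by
  set V := (U.erase j).erase m
  have hjV : esymmOn z (U.erase j) (r + 1) = esymmOn z V (r + 1) + z m * esymmOn z V r := by
    rw [← esymmOn_insert_succ z (notMem_erase m _), insert_erase (mem_erase.2 ⟨hjm.symm, hm⟩)]
  have hmV : esymmOn z (U.erase m) (r + 1) = esymmOn z V (r + 1) + z j * esymmOn z V r := by
    rw [← esymmOn_insert_succ z fun h => notMem_erase j U (mem_of_mem_erase h), erase_right_comm,
      insert_erase (mem_erase.2 ⟨hjm, hj⟩)]
  rw [hjV, hmV]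
  ring

end CommRing

lemma sum_sum_erase_comm {α M : Type*} [DecidableEq α] [AddCommMonoid M] (U : Finset α)
    (f : α → α → M) :
    ∑ j ∈ U, ∑ m ∈ U.erase j, f j m = ∑ j ∈ U, ∑ m ∈ U.erase j, f m j :=
  sum_comm' fun j m => by simp only [mem_erase]; tauto

section Field
variable {α K : Type*} [Field K] [DecidableEq α] (z : α → K)

lemma two_mul_sum_sum_erase_mul_div_sub_mul_esymmOn {U : Finset α} (hz : Set.InjOn z U)
    (r : ℕ) :
    2 * ∑ j ∈ U, ∑ m ∈ U.erase j, z j * z m / (z j - z m) * esymmOn z (U.erase j) r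
      = -(r * (r + 1)) * esymmOn z U (r + 1) := by
  have hpair : ∀ j ∈ U, ∀ m ∈ U.erase j,
      z j * z m / (z j - z m) * esymmOn z (U.erase j) r
        + z m * z j / (z m - z j) * esymmOn z (U.erase m) r
      = z j * z m / (z j - z m) * (esymmOn z (U.erase j) r - esymmOn z (U.erase m) r) := by
    intro j _ m _
    rw [← neg_sub (z j), div_neg]
    ring
  rw [two_mul]
  nth_rewrite 2 [sum_sum_erase_comm]
  simp only [← sum_add_distrib]
  rw [sum_congr rfl fun j hj => sum_congr rfl (hpair j hj)]
  cases r with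
  | zero => simp
  | succ q =>
    have hdiff : ∀ j ∈ U, ∀ m ∈ U.erase j,
        z j * z m / (z j - z m) * (esymmOn z (U.erase j) (q + 1) - esymmOn z (U.erase m) (q + 1))
          = -(z j * (z m * esymmOn z ((U.erase j).erase m) q)) := by
      intro j hj m hm
      obtain ⟨hmj, hmU⟩ := mem_erase.1 hm
      have hne : z j - z m ≠ 0 := sub_ne_zero.2 fun h => hmj (hz hmU hj h.symm)
      rw [esymmOn_erase_sub_esymmOn_erase z hj hmU (Ne.symm hmj), ← neg_sub (z j)]
      field_simp
    simp only [sum_congr rfl fun j hj => sum_congr rfl (hdiff j hj), sum_neg_distrib, ← mul_sum,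
      sum_mul_esymmOn_erase, mul_left_comm _ ((q : K) + 1), ← mul_sum]
    push_cast
    ring

lemma two_mul_sum_sum_erase_sq_div_sub_mul_esymmOn {U : Finset α} (hz : Set.InjOn z U) (r : ℕ) :
    2 * ∑ j ∈ U, ∑ m ∈ U.erase j, z j ^ 2 / (z j - z m) * esymmOn z (U.erase j) r
      = (r + 1) * (2 * ((#U : K) - 1) - r) * esymmOn z U (r + 1) := by
  have hsplit : ∀ j ∈ U, ∀ m ∈ U.erase j, z j ^ 2 / (z j - z m) * esymmOn z (U.erase j) r
      = z j * esymmOn z (U.erase j) r + z j * z m / (z j - z m) * esymmOn z (U.erase j) r := by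
    intro j hj m hm
    obtain ⟨hmj, hmU⟩ := mem_erase.1 hm
    have hne : z j - z m ≠ 0 := sub_ne_zero.2 fun h => hmj (hz hmU hj h.symm)
    field_simp
    ring
  have hdiag : ∑ j ∈ U, ∑ m ∈ U.erase j, z j * esymmOn z (U.erase j) r
      = ((#U : K) - 1) * ((r + 1) * esymmOn z U (r + 1)) := by
    rw [← sum_mul_esymmOn_erase, mul_sum]
    refine sum_congr rfl fun j hj => ?_
    rw [sum_const, nsmul_eq_mul, cast_card_erase_of_mem hj]
  simp only [sum_congr rfl fun j hj => sum_congr rfl (hsplit j hj), sum_add_distrib, mul_add,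
    two_mul_sum_sum_erase_mul_div_sub_mul_esymmOn z hz, hdiag]
  ring

end Field

section Derivatives
variable {N : ℕ} {f : (Fin N → ℂ) → ℂ} {j : Fin N} {z : Fin N → ℂ} {a b : ℂ}

lemma pderiv'_of_update_eq (h : ∀ t, f (Function.update z j t) = a + t * b) :
    pderiv' N f j z = b := by
  simp [pderiv', h]

lemma pderiv2_of_update_eq (h : ∀ t, f (Function.update z j t) = a + t * b) :
    pderiv2 N f j z = 0 := by
  simp [pderiv2, h, iteratedDeriv_succ]

end Derivatives

lemma esymm_eq_esymmOn (N l : ℕ) (z : Fin N → ℂ) : esymm N l z = esymmOn z univ l := rfl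

lemma esymm_update_succ (N r : ℕ) (z : Fin N → ℂ) (j : Fin N) (t : ℂ) :
    esymm N (r + 1) (Function.update z j t)
      = esymmOn z (univ.erase j) (r + 1) + t * esymmOn z (univ.erase j) r := by
  have hz : ∀ i ∈ univ.erase j, Function.update z j t i = z i := fun i hi =>
    Function.update_of_ne (ne_of_mem_erase hi) t z
  rw [esymm_eq_esymmOn]
  nth_rw 1 [← insert_erase (mem_univ j)]
  rw [esymmOn_insert_succ _ (notMem_erase j univ),
    Function.update_self, esymmOn_congr _ hz, esymmOn_congr _ hz]

theorem esymm_eigenfunction_Hk_general (N : ℕ) (l : ℕ)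
    (k : ℝ) (z : Fin N → ℂ)
    (hz : Function.Injective z) :
    - ∑ j : Fin N, (z j) ^ 2 * pderiv2 N (esymm N l) j z
      - (1 - (k : ℂ) * ((N : ℂ) - 1)) * ∑ j : Fin N, z j * pderiv' N (esymm N l) j z
      - 2 * (k : ℂ) * ∑ j : Fin N, ∑ m ∈ Finset.univ.erase j,
          (z j) ^ 2 / (z j - z m) * pderiv' N (esymm N l) j z
    = - (l : ℂ) * (1 + (k : ℂ) * ((N : ℂ) - (l : ℂ))) * esymm N l z := by
  cases l with
  | zero =>
    have hconst : ∀ j t, esymm N 0 (Function.update z j t) = 1 + t * 0 := by simp [esymm]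
    simp [pderiv'_of_update_eq (hconst _), pderiv2_of_update_eq (hconst _)]
  | succ r =>
    have heuler := sum_mul_esymmOn_erase z univ r
    have hsum := two_mul_sum_sum_erase_sq_div_sub_mul_esymmOn z (U := univ) hz.injOn r
    rw [card_univ, Fintype.card_fin] at hsum
    simp only [pderiv'_of_update_eq (esymm_update_succ N r z _ ·),
      pderiv2_of_update_eq (esymm_update_succ N r z _ ·), mul_zero, sum_const_zero, neg_zero,
      zero_sub]
    rw [esymm_eq_esymmOn]
    push_cast
    linear_combination (k * N - k - 1) * heuler - k * hsum

theorem esymm_eigenfunction_Hk (N : ℕ) (hN : 1 ≤ N) (l : ℕ) (hl : l ≤ N)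
    (k : ℝ) (hk : 0 < k) (z : Fin N → ℂ) (hz0 : ∀ j, z j ≠ 0)
    (hz : Function.Injective z) :
    - ∑ j : Fin N, (z j) ^ 2 * pderiv2 N (esymm N l) j z
      - (1 - (k : ℂ) * ((N : ℂ) - 1)) * ∑ j : Fin N, z j * pderiv' N (esymm N l) j z
      - 2 * (k : ℂ) * ∑ j : Fin N, ∑ m ∈ Finset.univ.erase j,
          (z j) ^ 2 / (z j - z m) * pderiv' N (esymm N l) j z
    = - (l : ℂ) * (1 + (k : ℂ) * ((N : ℂ) - (l : ℂ))) * esymm N l z :=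
  esymm_eigenfunction_Hk_general N l k z hz
end

section
/- The function x(t) = (arcosh(e^t), −arcosh(e^t)) is, for t > 0, a solution of the system dx_1/dt = coth((x_1 − x_2)/2), dx_2/dt = coth((x_2 − x_1)/2), and it is continuous on [0,∞) with x(0) = (0,0). -/
/-- The inverse hyperbolic cosine. -/
noncomputable def arcosh (x : ℝ) : ℝ := Real.log (x + Real.sqrt (x ^ 2 - 1))

/-- The hyperbolic cotangent. -/
noncomputable def coth (x : ℝ) : ℝ := Real.cosh x / Real.sinh x

/-! Since `x₂ = -x₁`, both equations reduce to `x₁' = coth x₁`. With `y = eᵗ = cosh x₁` one has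
`sinh x₁ = √(y² - 1)`, so `x₁' = y / √(y² - 1) = cosh x₁ / sinh x₁`. -/

theorem arcosh_eq_real_arcosh : arcosh = Real.arcosh := rfl

theorem coth_neg (x : ℝ) : coth (-x) = -coth x := by
  rw [coth, coth, Real.cosh_neg, Real.sinh_neg, div_neg]

theorem coth_arcosh {y : ℝ} (hy : 1 ≤ y) : coth (arcosh y) = y / √(y ^ 2 - 1) := by
  rw [coth, arcosh_eq_real_arcosh, Real.cosh_arcosh hy, Real.sinh_arcosh hy]

theorem hasDerivAt_arcosh_exp {t : ℝ} (ht : 0 < t) :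
    HasDerivAt (fun t => arcosh (Real.exp t)) (coth (arcosh (Real.exp t))) t := by
  have he : 1 < Real.exp t := Real.one_lt_exp_iff.mpr ht
  rw [coth_arcosh he.le, div_eq_inv_mul]
  exact (Real.hasDerivAt_arcosh he).comp t (Real.hasDerivAt_exp t)

theorem continuousOn_arcosh_exp : ContinuousOn (fun t => arcosh (Real.exp t)) (Set.Ici 0) :=
  Real.continuousOn_arcosh.comp Real.continuous_exp.continuousOn fun _ ht => Real.one_le_exp ht

/-- For `N = 2`, the curve `t ↦ (arcosh(eᵗ), −arcosh(eᵗ))` solves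
`dx₁/dt = coth((x₁−x₂)/2)`, `dx₂/dt = coth((x₂−x₁)/2)` for `t > 0`,
is continuous on `[0,∞)` and starts at `(0,0)`. -/
theorem solution_ode_noncompact_A_N2
    (x₁ x₂ : ℝ → ℝ) (h₁ : ∀ t, x₁ t = arcosh (Real.exp t)) (h₂ : ∀ t, x₂ t = - x₁ t) :
    (∀ t > 0, HasDerivAt x₁ (coth ((x₁ t - x₂ t) / 2)) t ∧
        HasDerivAt x₂ (coth ((x₂ t - x₁ t) / 2)) t) ∧
    ContinuousOn x₁ (Set.Ici 0) ∧ ContinuousOn x₂ (Set.Ici 0) ∧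
    x₁ 0 = 0 ∧ x₂ 0 = 0 := by
  obtain rfl : x₁ = fun t => arcosh (Real.exp t) := funext h₁
  obtain rfl : x₂ = fun t => -arcosh (Real.exp t) := funext h₂
  have hx₀ : arcosh (Real.exp 0) = 0 := by
    rw [Real.exp_zero, arcosh_eq_real_arcosh, Real.arcosh_zero]
  refine ⟨fun t ht => ⟨?_, ?_⟩, continuousOn_arcosh_exp, continuousOn_arcosh_exp.neg, hx₀, ?_⟩
  · rw [show (arcosh (Real.exp t) - -arcosh (Real.exp t)) / 2 = arcosh (Real.exp t) by ring]
    exact hasDerivAt_arcosh_exp ht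
  · rw [show (-arcosh (Real.exp t) - arcosh (Real.exp t)) / 2 = -arcosh (Real.exp t) by ring,
      coth_neg]
    exact (hasDerivAt_arcosh_exp ht).neg
  · simp only [hx₀, neg_zero]
end
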